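/- Let A and C be n×n real symmetric matrices with eigenvalue vectors λ(A), λ(C) arranged in decreasing order. Then the maximum of tr(C U A Uᵀ) over all orthogonal matrices U equals Σᵢ λᵢ(C) λᵢ(A). -/

import Mathlib

/-!
Diagonalize `C = Q diag(c) Qᵀ` and `A = P diag(a) Pᵀ`. For orthogonal `U` the matrix
`V = Qᵀ U P` is orthogonal and `tr (C U A Uᵀ) = ∑ᵢⱼ cᵢ aⱼ Vᵢⱼ²`, a linear function of the doubly
stochastic matrix `(Vᵢⱼ²)`. By Birkhoff's theorem it is therefore bounded by its values at
permutation matrices, which the rearrangement inequality bounds by `∑ᵢ λᵢ(C) λᵢ(A)`. A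
permutation matching the two sorted spectra gives `V` attaining the bound.
-/

open Finset

/-- Decreasing rearrangement of a vector in ℝⁿ. -/
noncomputable def dsort {n : ℕ} (v : Fin n → ℝ) : Fin n → ℝ :=
  fun i => - ((fun j => - v j) ∘ Tuple.sort (fun j => - v j)) i

open Matrix

section Rearrangement

variable {n : ℕ}

lemma dsort_apply (v : Fin n → ℝ) (i : Fin n) :
    dsort v i = v (Tuple.sort (fun j => - v j) i) := by
  simp [dsort]

lemma antitone_dsort (v : Fin n → ℝ) : Antitone (dsort v) := by
  intro i j hij
  simpa [dsort] using Tuple.monotone_sort (fun j => - v j) hij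

lemma sum_mul_comp_perm_le_sum_dsort_mul_dsort (f g : Fin n → ℝ) (σ : Equiv.Perm (Fin n)) :
    ∑ i, f i * g (σ i) ≤ ∑ i, dsort f i * dsort g i := by
  set τf := Tuple.sort (fun j => - f j)
  set τg := Tuple.sort (fun j => - g j)
  have hmonovary : Monovary (dsort f) (dsort g) :=
    (antitone_dsort f).monovary (antitone_dsort g)
  calc ∑ i, f i * g (σ i) = ∑ i, f (τf i) * g (σ (τf i)) :=
        (Equiv.sum_comp τf (fun i => f i * g (σ i))).symm
    _ = ∑ i, dsort f i * dsort g ((τg⁻¹ * σ * τf : Equiv.Perm (Fin n)) i) := by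
        simp [dsort_apply, τf, τg]
    _ ≤ ∑ i, dsort f i * dsort g i := hmonovary.sum_mul_comp_perm_le_sum_mul

lemma exists_perm_sum_dsort_mul_dsort_eq (f g : Fin n → ℝ) :
    ∃ σ : Equiv.Perm (Fin n), ∑ i, dsort f i * dsort g i = ∑ i, f i * g (σ i) := by
  set τf := Tuple.sort (fun j => - f j)
  set τg := Tuple.sort (fun j => - g j)
  refine ⟨τg * τf⁻¹, ?_⟩
  conv_rhs => rw [← Equiv.sum_comp τf]
  simp [dsort_apply, Equiv.Perm.mul_apply, τf, τg]

end Rearrangement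

lemma dotProduct_permMatrix_mulVec {ι R : Type*} [Fintype ι] [DecidableEq ι] [CommRing R]
    (c a : ι → R) (σ : Equiv.Perm ι) :
    c ⬝ᵥ σ.permMatrix R *ᵥ a = ∑ i, c i * a (σ i) := by
  simp [permMatrix_mulVec, dotProduct]

lemma dotProduct_mulVec_le_of_mem_doublyStochastic {n : ℕ} (c a : Fin n → ℝ)
    {S : Matrix (Fin n) (Fin n) ℝ} (hS : S ∈ doublyStochastic ℝ (Fin n)) :
    c ⬝ᵥ S *ᵥ a ≤ ∑ i, dsort c i * dsort a i := by
  have hlinear : IsLinearMap ℝ fun M : Matrix (Fin n) (Fin n) ℝ => c ⬝ᵥ M *ᵥ a :=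
    ⟨fun M N => by simp [add_mulVec], fun r M => by simp [smul_mulVec]⟩
  rw [← SetLike.mem_coe, doublyStochastic_eq_convexHull_permMatrix] at hS
  refine convexHull_min ?_ (convex_halfSpace_le hlinear _) hS
  rintro _ ⟨σ, rfl⟩
  simpa [dotProduct_permMatrix_mulVec] using sum_mul_comp_perm_le_sum_dsort_mul_dsort c a σ

lemma transpose_mem_orthogonalGroup {ι R : Type*} [Fintype ι] [DecidableEq ι] [CommRing R]
    {V : Matrix ι ι R} (hV : V ∈ orthogonalGroup ι R) : Vᵀ ∈ orthogonalGroup ι R := by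
  rw [mem_orthogonalGroup_iff', transpose_transpose]
  exact (mem_orthogonalGroup_iff _ _).1 hV

lemma hadamard_self_mem_doublyStochastic {ι R : Type*} [Fintype ι] [DecidableEq ι] [CommRing R]
    [LinearOrder R] [IsStrictOrderedRing R] {V : Matrix ι ι R} (hV : V ∈ orthogonalGroup ι R) :
    V ⊙ V ∈ doublyStochastic R ι := by
  have hrow := (mem_orthogonalGroup_iff _ _).1 hV
  have hcol := (mem_orthogonalGroup_iff' _ _).1 hV
  refine mem_doublyStochastic_iff_sum.2 ⟨fun i j => mul_self_nonneg _, fun i => ?_, fun j => ?_⟩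
  · simpa [mul_apply] using congrFun (congrFun hrow i) i
  · simpa [mul_apply] using congrFun (congrFun hcol j) j

lemma hadamard_self_permMatrix {ι R : Type*} [Fintype ι] [DecidableEq ι] [CommRing R]
    (σ : Equiv.Perm ι) : σ.permMatrix R ⊙ σ.permMatrix R = σ.permMatrix R := by
  ext i j
  simp only [hadamard_apply, Equiv.Perm.permMatrix, PEquiv.toMatrix_apply]
  split_ifs <;> simp

lemma permMatrix_mem_orthogonalGroup {ι R : Type*} [Fintype ι] [DecidableEq ι] [CommRing R]
    (σ : Equiv.Perm ι) : σ.permMatrix R ∈ orthogonalGroup ι R := by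
  rw [mem_orthogonalGroup_iff, transpose_permMatrix, ← permMatrix_mul, inv_mul_cancel,
    permMatrix_one]

lemma trace_diagonal_mul_mul_diagonal_mul_transpose {ι R : Type*} [Fintype ι] [DecidableEq ι]
    [CommRing R] (c a : ι → R) (V : Matrix ι ι R) :
    trace (diagonal c * V * diagonal a * Vᵀ) = c ⬝ᵥ (V ⊙ V) *ᵥ a := by
  simp only [trace, diag_apply, mul_apply, diagonal_apply, transpose_apply, dotProduct, mulVec,
    hadamard_apply, ite_mul, mul_ite, zero_mul, mul_zero, sum_ite_eq, sum_ite_eq', mem_univ,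
    if_true, mul_sum]
  refine sum_congr rfl fun i _ => sum_congr rfl fun j _ => ?_
  ring

lemma trace_conj_mul_conj_mul_transpose {ι R : Type*} [Fintype ι] [CommRing R]
    (X Y Q P U : Matrix ι ι R) :
    trace (Q * X * Qᵀ * U * (P * Y * Pᵀ) * Uᵀ)
      = trace (X * (Qᵀ * U * P) * Y * (Qᵀ * U * P)ᵀ) := by
  rw [show Q * X * Qᵀ * U * (P * Y * Pᵀ) * Uᵀ = Q * (X * (Qᵀ * U * P) * Y * (Pᵀ * Uᵀ)) by
      simp only [Matrix.mul_assoc], trace_mul_comm]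
  simp only [transpose_mul, transpose_transpose, Matrix.mul_assoc]

lemma Matrix.IsHermitian.eq_mul_diagonal_mul_transpose {ι : Type*} [Fintype ι] [DecidableEq ι]
    {A : Matrix ι ι ℝ} (hA : A.IsHermitian) :
    A = (hA.eigenvectorUnitary : Matrix ι ι ℝ) * diagonal hA.eigenvalues
      * (hA.eigenvectorUnitary : Matrix ι ι ℝ)ᵀ := by
  conv_lhs => rw [hA.spectral_theorem, Unitary.conjStarAlgAut_apply]
  simp [star_eq_conjTranspose]

theorem stmt11 {n : ℕ} (A C : Matrix (Fin n) (Fin n) ℝ)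
    (hA : A.IsHermitian) (hC : C.IsHermitian) :
    IsGreatest
      {r : ℝ | ∃ U : Matrix (Fin n) (Fin n) ℝ, U * U.transpose = 1 ∧
        r = Matrix.trace (C * U * A * U.transpose)}
      (∑ i, dsort hC.eigenvalues i * dsort hA.eigenvalues i) := by
  set Q : Matrix (Fin n) (Fin n) ℝ := ↑hC.eigenvectorUnitary
  set P : Matrix (Fin n) (Fin n) ℝ := ↑hA.eigenvectorUnitary
  have hQ : Q ∈ orthogonalGroup (Fin n) ℝ := hC.eigenvectorUnitary.2
  have hP : P ∈ orthogonalGroup (Fin n) ℝ := hA.eigenvectorUnitary.2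
  have htrace : ∀ U, trace (C * U * A * Uᵀ)
      = hC.eigenvalues ⬝ᵥ ((Qᵀ * U * P) ⊙ (Qᵀ * U * P)) *ᵥ hA.eigenvalues := by
    intro U
    conv_lhs => rw [hC.eq_mul_diagonal_mul_transpose, hA.eq_mul_diagonal_mul_transpose,
      trace_conj_mul_conj_mul_transpose, trace_diagonal_mul_mul_diagonal_mul_transpose]
  constructor
  · obtain ⟨σ, hσ⟩ := exists_perm_sum_dsort_mul_dsort_eq hC.eigenvalues hA.eigenvalues
    refine ⟨Q * σ.permMatrix ℝ * Pᵀ, ?_, ?_⟩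
    · refine (mem_orthogonalGroup_iff _ _).1 (mul_mem (mul_mem hQ ?_) ?_)
      exacts [permMatrix_mem_orthogonalGroup σ, transpose_mem_orthogonalGroup hP]
    · have hcancel : Qᵀ * (Q * σ.permMatrix ℝ * Pᵀ) * P = σ.permMatrix ℝ := by
        simp only [Matrix.mul_assoc, (mem_orthogonalGroup_iff' _ _).1 hP,
          ← Matrix.mul_assoc Qᵀ, (mem_orthogonalGroup_iff' _ _).1 hQ, Matrix.one_mul,
          Matrix.mul_one]
      rw [htrace, hcancel, hadamard_self_permMatrix, dotProduct_permMatrix_mulVec, hσ]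
  · rintro _ ⟨U, hU, rfl⟩
    rw [htrace]
    refine dotProduct_mulVec_le_of_mem_doublyStochastic _ _ (hadamard_self_mem_doublyStochastic ?_)
    exact mul_mem (mul_mem (transpose_mem_orthogonalGroup hQ) ((mem_orthogonalGroup_iff _ _).2 hU))
      hP
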